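/- arXiv:1011.6528 — 9 statements merged into one kernel-verified Lean document; each statement's English description precedes it below -/
import Mathlib

section
/- Let θ > 0 and define S_θ(z₀,z₁,z₂) = 1 + (z₀+z)/p + θ·z₀(z₀+z)/p² + (1/2−θ)·(z₀+z)²/p², where z = z₁+z₂ and p = (1−θz₁)(1−θz₂). Then |S_θ(0,z₁,z₂)| ≤ 1 for all complex z₁, z₂ with Re z₁ ≤ 0 and Re z₂ ≤ 0 if and only if θ ≥ 1/4. -/
/-!
The Cayley transform `r(w) = (1 + w) / (1 - w)` maps the closed left half-plane into the closed
unit disc, and `8θ² S_θ(0, z₁, z₂) = Q_θ(v)` for `v = r(θz₁) r(θz₂)` and the quadratic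
`Q_θ(v) = 8θ² + 4θ(v - 1) + (1 - 2θ)(v - 1)²`. Writing `v = a + bi`,
`|Q_θ(v)|² - 64θ⁴ = (|v|² - 1) H - 4(a - 1)²(2θ - 1)²(4θ - 1)` with `H ≥ 0` for `θ ≥ 1/8`.
So `|Q_θ| ≤ 8θ²` on the disc when `θ ≥ 1/4`, while for `θ < 1/4` the point `v = i`,
reached by `z₁ = i/θ, z₂ = 0`, violates it.
-/

noncomputable def S (θ : ℝ) (z₀ z₁ z₂ : ℂ) : ℂ :=
  let z : ℂ := z₁ + z₂
  let p : ℂ := (1 - (θ : ℂ) * z₁) * (1 - (θ : ℂ) * z₂)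
  1 + (z₀ + z) / p + (θ : ℂ) * (z₀ * (z₀ + z)) / p ^ 2
    + (1 / 2 - (θ : ℂ)) * (z₀ + z) ^ 2 / p ^ 2

open Complex

noncomputable def cayley (w : ℂ) : ℂ := (1 + w) / (1 - w)

lemma one_sub_ne_zero_of_re_nonpos {w : ℂ} (hw : w.re ≤ 0) : 1 - w ≠ 0 := by
  intro h
  have := congrArg re h
  simp only [sub_re, one_re, zero_re] at this
  linarith

lemma norm_one_add_le_norm_one_sub {w : ℂ} (hw : w.re ≤ 0) : ‖1 + w‖ ≤ ‖1 - w‖ := by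
  rw [← sq_le_sq₀ (norm_nonneg _) (norm_nonneg _), Complex.sq_norm, Complex.sq_norm,
    normSq_apply, normSq_apply]
  simp only [add_re, add_im, sub_re, sub_im, one_re, one_im]
  nlinarith

lemma norm_cayley_le_one {w : ℂ} (hw : w.re ≤ 0) : ‖cayley w‖ ≤ 1 := by
  rw [cayley, norm_div, div_le_one (norm_pos_iff.2 (one_sub_ne_zero_of_re_nonpos hw))]
  exact norm_one_add_le_norm_one_sub hw

lemma cayley_I : cayley I = I := by
  rw [cayley, div_eq_iff (one_sub_ne_zero_of_re_nonpos (by simp))]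
  linear_combination I_sq

noncomputable def stabilityPoly (θ : ℝ) (v : ℂ) : ℂ :=
  8 * (θ : ℂ) ^ 2 + 4 * (θ : ℂ) * (v - 1) + (1 - 2 * (θ : ℂ)) * (v - 1) ^ 2

lemma S_zero_eq_stabilityPoly {θ : ℝ} (hθ : θ ≠ 0) {z₁ z₂ : ℂ}
    (h₁ : 1 - (θ : ℂ) * z₁ ≠ 0) (h₂ : 1 - (θ : ℂ) * z₂ ≠ 0) :
    S θ 0 z₁ z₂ = stabilityPoly θ (cayley (θ * z₁) * cayley (θ * z₂)) / (8 * (θ : ℂ) ^ 2) := by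
  have hθ' : (θ : ℂ) ≠ 0 := ofReal_ne_zero.2 hθ
  rw [mul_comm] at h₁ h₂
  simp only [S, stabilityPoly, cayley]
  field_simp
  ring

lemma normSq_stabilityPoly_sub (θ : ℝ) (v : ℂ) :
    normSq (stabilityPoly θ v) - 64 * θ ^ 4 =
      (normSq v - 1) * ((1 - 2 * θ) ^ 2 * v.im ^ 2 + ((1 - 2 * θ) * (v.re - 1) + (6 * θ - 1)) ^ 2
        + (2 * θ - 1) ^ 2 * (8 * θ - 1)) - 4 * (v.re - 1) ^ 2 * (2 * θ - 1) ^ 2 * (4 * θ - 1) := by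
  simp only [stabilityPoly, normSq_apply, pow_two, add_re, add_im, sub_re, sub_im, mul_re, mul_im,
    ofReal_re, ofReal_im, re_ofNat, im_ofNat, one_re, one_im]
  ring

lemma norm_stabilityPoly_le {θ : ℝ} (hθ : 1 / 4 ≤ θ) {v : ℂ} (hv : ‖v‖ ≤ 1) :
    ‖stabilityPoly θ v‖ ≤ 8 * θ ^ 2 := by
  have hv' : normSq v ≤ 1 := by
    rw [← Complex.sq_norm]
    nlinarith [norm_nonneg v]
  have h8 : 0 ≤ 8 * θ - 1 := by linarith
  have h4 : 0 ≤ 4 * θ - 1 := by linarith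
  have hH : 0 ≤ (1 - 2 * θ) ^ 2 * v.im ^ 2 + ((1 - 2 * θ) * (v.re - 1) + (6 * θ - 1)) ^ 2
      + (2 * θ - 1) ^ 2 * (8 * θ - 1) := by positivity
  have hdefect : 0 ≤ 4 * (v.re - 1) ^ 2 * (2 * θ - 1) ^ 2 * (4 * θ - 1) := by positivity
  rw [← sq_le_sq₀ (norm_nonneg _) (by positivity), Complex.sq_norm]
  nlinarith [mul_nonpos_of_nonpos_of_nonneg (sub_nonpos.2 hv') hH, normSq_stabilityPoly_sub θ v]

lemma lt_norm_stabilityPoly_I {θ : ℝ} (hθ : θ < 1 / 4) :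
    8 * θ ^ 2 < ‖stabilityPoly θ I‖ := by
  have h := normSq_stabilityPoly_sub θ I
  simp only [normSq_I, I_re, sub_self, zero_mul, zero_sub] at h
  have : 0 < (2 * θ - 1) ^ 2 * (1 - 4 * θ) := mul_pos (by nlinarith) (by linarith)
  rw [← sq_lt_sq₀ (by positivity) (norm_nonneg _), Complex.sq_norm]
  nlinarith

theorem stmt0 (θ : ℝ) (hθ : 0 < θ) :
    (∀ z₁ z₂ : ℂ, z₁.re ≤ 0 → z₂.re ≤ 0 → ‖S θ 0 z₁ z₂‖ ≤ 1)
      ↔ θ ≥ 1 / 4 := by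
  have hre {z : ℂ} (hz : z.re ≤ 0) : (θ * z).re ≤ 0 := by
    simpa using mul_nonpos_of_nonneg_of_nonpos hθ.le hz
  have hnorm : ‖8 * (θ : ℂ) ^ 2‖ = 8 * θ ^ 2 := by simp [sq_abs]
  constructor
  · intro h
    by_contra! hlt
    have hI : (θ : ℂ) * (I / θ) = I := mul_div_cancel₀ _ (ofReal_ne_zero.2 hθ.ne')
    have hv : cayley (θ * (I / θ)) * cayley (θ * 0) = I := by
      rw [hI, mul_zero, cayley_I, cayley]
      simp
    have hS := h (I / θ) 0 (by simp) le_rfl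
    rw [S_zero_eq_stabilityPoly hθ.ne' (hI ▸ one_sub_ne_zero_of_re_nonpos (by simp)) (by simp),
      hv, norm_div, hnorm, div_le_one (by positivity)] at hS
    exact (lt_norm_stabilityPoly_I hlt).not_ge hS
  · intro hθ₄ z₁ z₂ h₁ h₂
    rw [S_zero_eq_stabilityPoly hθ.ne' (one_sub_ne_zero_of_re_nonpos (hre h₁))
      (one_sub_ne_zero_of_re_nonpos (hre h₂)), norm_div, hnorm, div_le_one (by positivity)]
    refine norm_stabilityPoly_le hθ₄ ?_
    rw [norm_mul]
    exact mul_le_one₀ (norm_cayley_le_one (hre h₁)) (norm_nonneg _) (norm_cayley_le_one (hre h₂))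
end

section
/- Let θ > 0 and define S_θ(z₀,z₁,z₂) = 1 + (z₀+z)/p + θ·z₀(z₀+z)/p² + (1/2−θ)·(z₀+z)²/p² with z = z₁+z₂, p = (1−θz₁)(1−θz₂). With η = 1+i and real a → 0⁻, the squared modulus satisfies |S_θ(−2a, aη, aη)|² = 1 + (40θ² − 16θ)a³ + O(a⁴). -/
open Complex

lemma sq_one_sub_add_sq_pos (x : ℝ) : 0 < (1 - x) ^ 2 + x ^ 2 := by
  nlinarith [sq_nonneg (2 * x - 1)]

namespace S

variable (θ a : ℝ)

/-- `S θ (-2a) (aη) (aη) · (1 - θaη)⁴ = numRe θ a + numIm θ a · i` with `η = 1 + i`. -/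
def numRe : ℝ :=
  1 - 4 * θ * a - 2 * a ^ 2 + 8 * θ * a ^ 2 - 4 * θ ^ 2 * a ^ 3 + 8 * θ ^ 3 * a ^ 3
    - 4 * θ ^ 4 * a ^ 4

def numIm : ℝ :=
  2 * a - 4 * θ * a - 8 * θ * a ^ 2 + 12 * θ ^ 2 * a ^ 2 - 8 * θ ^ 3 * a ^ 3

def denom : ℝ := ((1 - θ * a) ^ 2 + (θ * a) ^ 2) ^ 4

def remainderNum : ℝ :=
  4 - 32 * θ + 128 * θ ^ 3 + 16 * θ ^ 2 * (1 + 26 * θ - 64 * θ ^ 2) * a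
    - 96 * θ ^ 4 * (13 - 32 * θ) * a ^ 2 + 32 * θ ^ 5 * (68 - 169 * θ) * a ^ 3
    + 1280 * θ ^ 6 * (5 * θ - 2) * a ^ 4 + 1024 * θ ^ 7 * (2 - 5 * θ) * a ^ 5
    + 512 * θ ^ 8 * (5 * θ - 2) * a ^ 6 + 128 * θ ^ 9 * (2 - 5 * θ) * a ^ 7

lemma normSq_one_sub_mul_one_add_I :
    normSq (1 - θ * (a * (1 + I))) = (1 - θ * a) ^ 2 + (θ * a) ^ 2 := by
  have h : 1 - θ * (a * (1 + I)) = ((1 - θ * a : ℝ) : ℂ) + ((-(θ * a) : ℝ) : ℂ) * I := by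
    push_cast; ring
  rw [h, normSq_add_mul_I]
  ring

lemma denom_pos : 0 < denom θ a := pow_pos (sq_one_sub_add_sq_pos (θ * a)) 4

lemma one_sub_mul_one_add_I_ne_zero : 1 - θ * (a * (1 + I)) ≠ 0 := by
  rw [← normSq_pos, normSq_one_sub_mul_one_add_I]
  exact sq_one_sub_add_sq_pos (θ * a)

lemma mul_pow_four_of_diag {z₀ z : ℂ} (hz : 1 - θ * z ≠ 0) :
    S θ z₀ z z * (1 - θ * z) ^ 4 = (1 - θ * z) ^ 4 + (z₀ + 2 * z) * (1 - θ * z) ^ 2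
      + θ * (z₀ * (z₀ + 2 * z)) + (1 / 2 - θ) * (z₀ + 2 * z) ^ 2 := by
  simp only [S]
  generalize 1 - θ * z = p at hz ⊢
  field_simp
  ring

lemma eq_num_div :
    S θ (-2 * a) (a * (1 + I)) (a * (1 + I)) =
      (numRe θ a + numIm θ a * I) / (1 - θ * (a * (1 + I))) ^ 4 := by
  have hp := one_sub_mul_one_add_I_ne_zero θ a
  rw [eq_div_iff (pow_ne_zero 4 hp), mul_pow_four_of_diag θ hp]
  apply Complex.ext <;> simp [numRe, numIm, pow_succ] <;> ring

lemma norm_sq_eq :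
    ‖S θ (-2 * a) (a * (1 + I)) (a * (1 + I))‖ ^ 2
      = (numRe θ a ^ 2 + numIm θ a ^ 2) / denom θ a := by
  rw [eq_num_div, Complex.sq_norm, map_div₀, map_pow, normSq_one_sub_mul_one_add_I,
    normSq_add_mul_I, denom]

lemma norm_sq_sub_eq :
    ‖S θ (-2 * a) (a * (1 + I)) (a * (1 + I))‖ ^ 2 - (1 + (40 * θ ^ 2 - 16 * θ) * a ^ 3)
      = a ^ 4 * (remainderNum θ a / denom θ a) := by
  have hD := (denom_pos θ a).ne'
  rw [norm_sq_eq]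
  field_simp
  simp only [numRe, numIm, denom, remainderNum]
  ring

lemma continuous_remainderNum_div_denom : Continuous fun a ↦ remainderNum θ a / denom θ a :=
  Continuous.div (by unfold remainderNum; fun_prop) (by unfold denom; fun_prop)
    fun a ↦ (denom_pos θ a).ne'

end S

theorem stmt3_general (θ : ℝ) :
    let η : ℂ := 1 + Complex.I
    ∃ C > 0, ∃ δ > 0, ∀ a : ℝ, -δ < a → a < 0 →
      |‖S θ (-2 * a) (a * η) (a * η)‖ ^ 2
          - (1 + (40 * θ ^ 2 - 16 * θ) * a ^ 3)| ≤ C * a ^ 4 := by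
  intro η
  obtain ⟨M, hM⟩ := (isCompact_Icc (a := -1) (b := 0)).exists_bound_of_continuousOn
    (S.continuous_remainderNum_div_denom θ).continuousOn
  refine ⟨max M 1, by positivity, 1, one_pos, fun a ha₁ ha₀ ↦ ?_⟩
  rw [S.norm_sq_sub_eq, abs_mul, abs_of_nonneg (by positivity), mul_comm]
  gcongr
  exact (hM a ⟨ha₁.le, ha₀.le⟩).trans (le_max_left _ _)

theorem stmt3 (θ : ℝ) (hθ : 0 < θ) :
    let η : ℂ := 1 + Complex.I
    ∃ C > 0, ∃ δ > 0, ∀ a : ℝ, -δ < a → a < 0 →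
      |‖S θ (-2 * a) (a * η) (a * η)‖ ^ 2
          - (1 + (40 * θ ^ 2 - 16 * θ) * a ^ 3)| ≤ C * a ^ 4 :=
  stmt3_general θ
end

section
/- Let θ > 0 and define S_θ(z₀,z₁,z₂) = 1 + (z₀+z)/p + θ·z₀(z₀+z)/p² + (1/2−θ)·(z₀+z)²/p², where z = z₁+z₂ and p = (1−θz₁)(1−θz₂). Suppose |S_θ(z₀,z₁,z₂)| ≤ 1 holds for all real z₀ and complex z₁, z₂ satisfying |z₀| ≤ 2√(Re z₁ · Re z₂), Re z₁ ≤ 0, Re z₂ ≤ 0. Then θ ≥ 2/5. -/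
open Complex Filter Topology

lemma S_eq_div {θ : ℝ} {z₀ z₁ z₂ : ℂ} (hp : (1 - θ * z₁) * (1 - θ * z₂) ≠ 0) :
    S θ z₀ z₁ z₂ =
      (((1 - θ * z₁) * (1 - θ * z₂)) ^ 2 + (z₀ + (z₁ + z₂)) * ((1 - θ * z₁) * (1 - θ * z₂))
        + θ * (z₀ * (z₀ + (z₁ + z₂))) + (1 / 2 - θ) * (z₀ + (z₁ + z₂)) ^ 2)
      / ((1 - θ * z₁) * (1 - θ * z₂)) ^ 2 := by
  simp only [S]
  generalize (1 - θ * z₁) * (1 - θ * z₂) = p at *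
  field_simp

/-- `t⁻³ (|N|² - |p²|²)`, where `S θ (2t) (-t) (-t + t i) = N / p²`. -/
noncomputable def sWitnessExcess (θ t : ℝ) : ℝ :=
  2 * θ * (2 - 5 * θ) + t * (1 / 4 - 2 * θ + 17 * θ ^ 2 - 36 * θ ^ 3)
    + t ^ 2 * (-θ ^ 2 + 10 * θ ^ 3 - 46 * θ ^ 4) + t ^ 3 * (2 * θ ^ 4 - 24 * θ ^ 5)
    - t ^ 4 * (4 * θ ^ 6)

lemma one_lt_norm_S_witness {θ t : ℝ} (hθ : 0 < θ) (ht : 0 < t)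
    (hexcess : 0 < sWitnessExcess θ t) :
    1 < ‖S θ (2 * t : ℝ) (-t : ℝ) ((-t : ℝ) + t * I)‖ := by
  set a := 1 + θ * t
  set b := θ * t
  have ha : 0 < a := by positivity
  have hb : 0 < b := by positivity
  -- `1 - θ z₁ = a` and `1 - θ z₂ = a - b i`
  have hS : S θ (2 * t : ℝ) (-t : ℝ) ((-t : ℝ) + t * I) =
      ⟨a ^ 4 - a ^ 2 * b ^ 2 + t * a * b - (1 / 2 - θ) * t ^ 2,
        -2 * a ^ 3 * b + t * a ^ 2 + 2 * θ * t ^ 2⟩ / ⟨a ^ 4 - a ^ 2 * b ^ 2, -2 * a ^ 3 * b⟩ := by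
    rw [S_eq_div]
    · congr 1 <;> apply Complex.ext <;> simp [a, b, pow_succ] <;> ring
    · refine mul_ne_zero ?_ ?_ <;> intro h <;> apply ha.ne'
      · simpa [a] using congrArg re h
      · simpa [a] using congrArg re h
  have hden : (⟨a ^ 4 - a ^ 2 * b ^ 2, -2 * a ^ 3 * b⟩ : ℂ) ≠ 0 := by
    intro h
    have him := congrArg im h
    simp only [zero_im] at him
    nlinarith [mul_pos (pow_pos ha 3) hb]
  rw [hS, norm_div, one_lt_div (norm_pos_iff.2 hden), ← sq_lt_sq₀ (norm_nonneg _) (norm_nonneg _),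
    ← normSq_eq_norm_sq, ← normSq_eq_norm_sq, normSq_mk, normSq_mk, ← sub_pos]
  convert mul_pos (pow_pos ht 3) hexcess using 1
  simp only [a, b, sWitnessExcess]
  ring

lemma exists_pos_sWitnessExcess_pos {θ : ℝ} (hθ : 0 < θ) (hθ' : θ < 2 / 5) :
    ∃ t > 0, 0 < sWitnessExcess θ t := by
  have hcont : Continuous (sWitnessExcess θ) := by unfold sWitnessExcess; fun_prop
  have h0 : 0 < sWitnessExcess θ 0 := by
    have : sWitnessExcess θ 0 = 2 * θ * (2 - 5 * θ) := by simp [sWitnessExcess]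
    rw [this]
    exact mul_pos (by positivity) (by linarith)
  obtain ⟨t, hpos, ht⟩ := ((hcont.tendsto 0).eventually (lt_mem_nhds h0)
    |>.filter_mono nhdsWithin_le_nhds |>.and (self_mem_nhdsWithin (s := Set.Ioi 0))).exists
  exact ⟨t, ht, hpos⟩

theorem stmt4 (θ : ℝ) (hθ : 0 < θ)
    (h : ∀ (z₀ : ℝ) (z₁ z₂ : ℂ), z₁.re ≤ 0 → z₂.re ≤ 0 →
      |z₀| ≤ 2 * Real.sqrt (z₁.re * z₂.re) →
      ‖S θ (z₀ : ℂ) z₁ z₂‖ ≤ 1) :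
    θ ≥ 2 / 5 := by
  by_contra! hθ'
  obtain ⟨t, ht, hexcess⟩ := exists_pos_sWitnessExcess_pos hθ hθ'
  have hadmissible : |2 * t| ≤ 2 * Real.sqrt (((-t : ℝ) : ℂ).re * ((-t : ℝ) + t * I).re) := by
    simp [abs_of_pos ht, Real.sqrt_mul_self ht.le]
  refine (one_lt_norm_S_witness hθ ht hexcess).not_ge (h _ _ _ ?_ ?_ hadmissible)
  · simpa using ht.le
  · simpa using ht.le
end

section
/- Let a, b, c be real numbers with |a+b+c| = 1 such that |aζ² + bζ + c| ≤ 1 for all complex ζ with |ζ| = 1. Then ab + bc + 4ac ≥ 0. -/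
/-!
On the unit circle, `‖a ζ² + b ζ + c‖²` is the quadratic
`4ac x² + 2(ab + bc) x + (a² + b² + c² - 2ac)` in `x = Re ζ`. By hypothesis it is at most `1`
on `[-1, 1]`, and at `x = 1` it equals `(a + b + c)² = 1`; so its left derivative there,
`2(ab + bc + 4ac)`, is nonnegative.
-/

open Set

lemma two_mul_add_nonneg_of_le_on_Ioo {p q r y x₀ : ℝ} (hy : y < x₀)
    (h : ∀ x ∈ Ioo y x₀, p * x ^ 2 + q * x + r ≤ p * x₀ ^ 2 + q * x₀ + r) :
    0 ≤ 2 * p * x₀ + q := by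
  have hsub : Ioo y x₀ ⊆ {x | 0 ≤ p * (x + x₀) + q} := by
    intro x hx
    have hfactor : p * x ^ 2 + q * x + r - (p * x₀ ^ 2 + q * x₀ + r)
        = (x - x₀) * (p * (x + x₀) + q) := by ring
    exact nonneg_of_mul_nonpos_right (by linarith [h x hx]) (sub_neg.2 hx.2)
  have hclosed : IsClosed {x : ℝ | 0 ≤ p * (x + x₀) + q} :=
    isClosed_le continuous_const (by fun_prop)
  have hx₀ : x₀ ∈ {x | 0 ≤ p * (x + x₀) + q} :=
    hclosed.closure_subset_iff.2 hsub (by simp [closure_Ioo hy.ne, hy.le])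
  simp only [mem_ofPred_eq] at hx₀
  linarith

lemma Complex.exists_norm_eq_one_re_eq {x : ℝ} (hx : x ∈ Icc (-1) 1) :
    ∃ ζ : ℂ, ‖ζ‖ = 1 ∧ ζ.re = x :=
  ⟨Complex.exp (Real.arccos x * Complex.I), Complex.norm_exp_ofReal_mul_I _, by
    rw [Complex.exp_ofReal_mul_I_re, Real.cos_arccos hx.1 hx.2]⟩

lemma Complex.sq_norm_quadratic_of_norm_eq_one (a b c : ℝ) {ζ : ℂ} (hζ : ‖ζ‖ = 1) :
    ‖(a : ℂ) * ζ ^ 2 + (b : ℂ) * ζ + (c : ℂ)‖ ^ 2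
      = 4 * a * c * ζ.re ^ 2 + 2 * (a * b + b * c) * ζ.re + (a ^ 2 + b ^ 2 + c ^ 2 - 2 * a * c) := by
  have hre_im : ζ.re ^ 2 + ζ.im ^ 2 = 1 := by
    rw [← Complex.normSq_add_mul_I, ← Complex.sq_norm, Complex.re_add_im, hζ, one_pow]
  rw [Complex.sq_norm, Complex.normSq_apply]
  simp only [pow_two, Complex.mul_re, Complex.mul_im, Complex.add_re, Complex.add_im,
    Complex.ofReal_re, Complex.ofReal_im]
  linear_combination (a ^ 2 * (ζ.im ^ 2 + ζ.re ^ 2 + 1) + 2 * a * b * ζ.re + b ^ 2 - 2 * a * c)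
    * hre_im

theorem stmt5 (a b c : ℝ) (habc : |a + b + c| = 1)
    (h : ∀ ζ : ℂ, ‖ζ‖ = 1 →
      ‖(a : ℂ) * ζ ^ 2 + (b : ℂ) * ζ + (c : ℂ)‖ ≤ 1) :
    a * b + b * c + 4 * a * c ≥ 0 := by
  have hmax : ∀ x ∈ Ioo (-1 : ℝ) 1,
      4 * a * c * x ^ 2 + 2 * (a * b + b * c) * x + (a ^ 2 + b ^ 2 + c ^ 2 - 2 * a * c)
        ≤ 4 * a * c * 1 ^ 2 + 2 * (a * b + b * c) * 1 + (a ^ 2 + b ^ 2 + c ^ 2 - 2 * a * c) := by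
    intro x hx
    obtain ⟨ζ, hζ, rfl⟩ := Complex.exists_norm_eq_one_re_eq (Ioo_subset_Icc_self hx)
    have hnorm := h ζ hζ
    have hsum : (a + b + c) ^ 2 = 1 := by rw [← sq_abs, habc, one_pow]
    rw [← Complex.sq_norm_quadratic_of_norm_eq_one a b c hζ]
    nlinarith [norm_nonneg ((a : ℂ) * ζ ^ 2 + (b : ℂ) * ζ + (c : ℂ))]
  have hslope := two_mul_add_nonneg_of_le_on_Ioo (by norm_num) hmax
  linarith
end

section
/- Let θ > 0 and define S_θ(z₀,z₁,z₂) = 1 + (z₀+z)/p + θ·z₀(z₀+z)/p² + (1/2−θ)·(z₀+z)²/p² with z = z₁+z₂, p = (1−θz₁)(1−θz₂). Suppose |S_θ(z₀,z₁,z₂)| ≤ 1 holds for all complex z₀ and real z₁, z₂ satisfying |z₀| ≤ 2√(z₁z₂), z₁ ≤ 0, z₂ ≤ 0. Then θ ≥ 5/12. -/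
open Complex

lemma S_neg_inv_neg_inv {θ : ℝ} (hθ : θ ≠ 0) (v : ℂ) :
    S θ ((v + 2) / θ) ((-θ⁻¹ : ℝ) : ℂ) ((-θ⁻¹ : ℝ) : ℂ) =
      1 + v * (v + 12 * θ) / (32 * θ ^ 2) := by
  have hθ' : (θ : ℂ) ≠ 0 := ofReal_ne_zero.mpr hθ
  simp only [S]
  push_cast
  field_simp
  ring

lemma norm_add_two_eq_two {a b : ℝ} (hab : a ^ 2 + b ^ 2 = -4 * a) :
    ‖a + b * I + 2‖ = 2 := by
  have : a + b * I + 2 = ((a + 2 : ℝ) : ℂ) + (b : ℂ) * I := by push_cast; ring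
  rw [this, norm_add_mul_I, Real.sqrt_eq_iff_mul_self_eq] <;> nlinarith

lemma normSq_add_mul_add_of_sq_add_sq_eq (θ : ℝ) {a b : ℝ} (hab : a ^ 2 + b ^ 2 = -4 * a) :
    normSq (32 * θ ^ 2 + (a + b * I) * (a + b * I + 12 * θ)) =
      (32 * θ ^ 2) ^ 2 - 16 * a * (4 * θ ^ 2 * (5 - 12 * θ) - (2 * θ - 1) * (4 * θ - 1) * a) := by
  have hb : b ^ 2 = -4 * a - a ^ 2 := by linarith
  simp only [normSq_apply, sq, add_re, add_im, mul_re, mul_im, I_re, I_im, ofReal_re, ofReal_im,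
    re_ofNat, im_ofNat]
  linear_combination (b ^ 2 - 4 * a + a ^ 2 + 24 * a * θ + 80 * θ ^ 2) * hb

lemma nonneg_of_norm_S_le_one {θ a b : ℝ} (hθ : 0 < θ) (hab : a ^ 2 + b ^ 2 = -4 * a)
    (hS : ‖S θ ((a + b * I + 2) / θ) ((-θ⁻¹ : ℝ) : ℂ) ((-θ⁻¹ : ℝ) : ℂ)‖ ≤ 1) :
    0 ≤ a * (4 * θ ^ 2 * (5 - 12 * θ) - (2 * θ - 1) * (4 * θ - 1) * a) := by
  have hc_pos : (0 : ℝ) < 32 * θ ^ 2 := by positivity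
  have hc : (32 * θ ^ 2 : ℂ) ≠ 0 := by exact_mod_cast hc_pos.ne'
  have hc_norm : ‖(32 * θ ^ 2 : ℂ)‖ = 32 * θ ^ 2 := by
    exact_mod_cast Complex.norm_of_nonneg hc_pos.le
  rw [S_neg_inv_neg_inv hθ.ne', one_add_div hc, norm_div, hc_norm, div_le_one hc_pos] at hS
  have hsq := pow_le_pow_left₀ (norm_nonneg _) hS 2
  rw [← normSq_eq_norm_sq, normSq_add_mul_add_of_sq_add_sq_eq θ hab] at hsq
  linarith

theorem stmt7 (θ : ℝ) (hθ : 0 < θ)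
    (h : ∀ (z₀ : ℂ) (z₁ z₂ : ℝ), z₁ ≤ 0 → z₂ ≤ 0 →
      ‖z₀‖ ≤ 2 * Real.sqrt (z₁ * z₂) →
      ‖S θ z₀ (z₁ : ℂ) (z₂ : ℂ)‖ ≤ 1) :
    θ ≥ 5 / 12 := by
  by_contra! hlt
  have hδ : 0 < θ ^ 2 * (5 - 12 * θ) := mul_pos (pow_pos hθ 2) (by linarith)
  -- for this `a` the bracket in `nonneg_of_norm_S_le_one` is `2θ²(5 - 12θ)(8θ² - 6θ + 3) > 0`
  set a : ℝ := -2 * (θ ^ 2 * (5 - 12 * θ))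
  have ha : -4 ≤ a ∧ a < 0 := ⟨by nlinarith, by linarith⟩
  set b : ℝ := Real.sqrt (-a * (4 + a))
  have hab : a ^ 2 + b ^ 2 = -4 * a := by
    rw [Real.sq_sqrt (by nlinarith)]; ring
  have hz₀ : ‖(a + b * I + 2) / θ‖ ≤ 2 * Real.sqrt (-θ⁻¹ * -θ⁻¹) := by
    rw [neg_mul_neg, ← sq, Real.sqrt_sq (by positivity), norm_div, norm_add_two_eq_two hab,
      norm_real, Real.norm_of_nonneg hθ.le, div_eq_mul_inv]
  have hneg : -θ⁻¹ ≤ 0 := by simp [hθ.le]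
  have key := nonneg_of_norm_S_le_one hθ hab (h _ _ _ hneg hneg hz₀)
  have hK : 0 < 4 * θ ^ 2 * (5 - 12 * θ) - (2 * θ - 1) * (4 * θ - 1) * a := by
    nlinarith [sq_nonneg (4 * θ - 3 / 2)]
  nlinarith [mul_pos (neg_pos.mpr ha.2) hK]
end

section
/- Let θ > 0 and let z₁, z₂ be complex numbers with Re z₁ ≤ 0 and Re z₂ ≤ 0. Set z = z₁ + z₂ and p = (1−θz₁)(1−θz₂). Then 2√((Re z₁)(Re z₂)) ≤ |p/(2θ)| − |p/(2θ) + z|. -/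
/-!
Since `p / (2θ) + z = (1 + θz₁)(1 + θz₂) / (2θ)`, the claim reads
`4θ √(Re z₁ Re z₂) ≤ |1 - θz₁| |1 - θz₂| - |1 + θz₁| |1 + θz₂|`.
Now `|1 - θzⱼ|² = |1 + θzⱼ|² + (-4θ Re zⱼ)`, so this is the Cauchy–Schwarz inequality for the
vectors `(|1 + θzⱼ|, √(-4θ Re zⱼ))`, `j = 1, 2`.
-/

theorem Complex.sq_norm_one_sub (w : ℂ) : ‖1 - w‖ ^ 2 = ‖1 + w‖ ^ 2 - 4 * w.re := by
  simp only [Complex.sq_norm, Complex.normSq_sub, Complex.normSq_add, one_mul, Complex.conj_re]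
  ring

theorem mul_add_sqrt_mul_sqrt_le {a b c d x y : ℝ} (ha : 0 ≤ a) (hb : 0 ≤ b)
    (hx : 0 ≤ x) (hy : 0 ≤ y) (ha2 : a ^ 2 = c ^ 2 + x) (hb2 : b ^ 2 = d ^ 2 + y) :
    c * d + √x * √y ≤ a * b := by
  refine le_of_pow_le_pow_left₀ two_ne_zero (mul_nonneg ha hb) ?_
  have hsx := Real.sq_sqrt hx
  have hsy := Real.sq_sqrt hy
  calc (c * d + √x * √y) ^ 2 = (c ^ 2 + x) * (d ^ 2 + y) - (c * √y - d * √x) ^ 2 := by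
        linear_combination (√y ^ 2 + d ^ 2) * hsx + (x + c ^ 2) * hsy
    _ ≤ (a * b) ^ 2 := by rw [mul_pow, ha2, hb2]; exact sub_le_self _ (sq_nonneg _)

theorem div_two_mul_add_eq {K : Type*} [Field K] [CharZero K] {θ : K} (hθ : θ ≠ 0) (a b : K) :
    (1 - θ * a) * (1 - θ * b) / (2 * θ) + (a + b) = (1 + θ * a) * (1 + θ * b) / (2 * θ) := by
  field_simp
  ring

theorem stmt10 (θ : ℝ) (hθ : 0 < θ) (z₁ z₂ : ℂ)
    (h₁ : z₁.re ≤ 0) (h₂ : z₂.re ≤ 0) :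
    let z : ℂ := z₁ + z₂
    let p : ℂ := (1 - (θ : ℂ) * z₁) * (1 - (θ : ℂ) * z₂)
    2 * Real.sqrt (z₁.re * z₂.re)
      ≤ ‖p / (2 * θ)‖ - ‖p / (2 * θ) + z‖ := by
  intro z p
  have hθc : (θ : ℂ) ≠ 0 := Complex.ofReal_ne_zero.mpr hθ.ne'
  have h2θ : ‖(2 * θ : ℂ)‖ = 2 * θ := by
    rw [← Complex.ofReal_ofNat, ← Complex.ofReal_mul, Complex.norm_real, Real.norm_of_nonneg]
    positivity
  have hsqrt : √(-4 * θ * z₁.re) * √(-4 * θ * z₂.re) = 4 * θ * √(z₁.re * z₂.re) := by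
    rw [← Real.sqrt_mul (by nlinarith), show -4 * θ * z₁.re * (-4 * θ * z₂.re)
      = (4 * θ) ^ 2 * (z₁.re * z₂.re) by ring, Real.sqrt_mul (by positivity),
      Real.sqrt_sq (by positivity)]
  have hcs := mul_add_sqrt_mul_sqrt_le (norm_nonneg (1 - θ * z₁)) (norm_nonneg (1 - θ * z₂))
    (c := ‖1 + θ * z₁‖) (d := ‖1 + θ * z₂‖) (x := -4 * θ * z₁.re) (y := -4 * θ * z₂.re)
    (by nlinarith) (by nlinarith)
    (by rw [Complex.sq_norm_one_sub, Complex.re_ofReal_mul]; ring)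
    (by rw [Complex.sq_norm_one_sub, Complex.re_ofReal_mul]; ring)
  rw [hsqrt] at hcs
  simp only [p, z, div_two_mul_add_eq hθc, norm_div, norm_mul, h2θ]
  rw [div_sub_div_same, le_div_iff₀ (by positivity)]
  linarith
end

section
/- Let θ ≥ 1/2 and r ∈ [0,1]. The function g₂(φ) = |8θ² + 4θ(r·e^{iφ}−1) + (1−2θ)(r·e^{iφ}−1)²|² satisfies g₂'(φ) = 4(2θ−1)(4θ−1)[2(2θ−1)r·cos φ + r² − (4θ−1)]·r·sin φ, and since 2(2θ−1)r·cos φ + r² − (4θ−1) ≤ 0, g₂ is nonincreasing on [0, π]. -/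
/-!
Writing `z = r e^{iφ}`, the polynomial equals `(2θ-1)(4θ-1) + 2(4θ-1) z + (1-2θ) z²`, which has
real coefficients, so its squared modulus is a quadratic polynomial in `cos φ` and `g₂'` is
`-sin φ` times the derivative of that quadratic at `cos φ`. The factor
`2(2θ-1) r cos φ + r² - (4θ-1)` is nonpositive because `cos φ ≤ 1` and `r ≤ 1`, and
`sin φ ≥ 0` on `[0, π]`.
-/

open Complex in
theorem norm_sq_quadratic_ofReal_mul_exp (a b c r φ : ℝ) :
    ‖(a : ℂ) + b * (r * exp (I * φ)) + c * (r * exp (I * φ)) ^ 2‖ ^ 2 =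
      a ^ 2 + b ^ 2 * r ^ 2 + c ^ 2 * r ^ 4 - 2 * a * c * r ^ 2
        + 2 * b * r * (a + c * r ^ 2) * Real.cos φ + 4 * a * c * r ^ 2 * Real.cos φ ^ 2 := by
  have hz : r * exp (I * φ) = ((r * Real.cos φ : ℝ) : ℂ) + ((r * Real.sin φ : ℝ) : ℂ) * I := by
    rw [mul_comm I, exp_mul_I, ← ofReal_cos, ← ofReal_sin]; push_cast; ring
  rw [hz, Complex.sq_norm, normSq_apply]
  simp only [add_re, add_im, mul_re, mul_im, ofReal_re, ofReal_im, I_re, I_im, sq]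
  linear_combination (b ^ 2 * r ^ 2 + c ^ 2 * r ^ 4 * (Real.sin φ ^ 2 + Real.cos φ ^ 2 + 1)
    - 2 * a * c * r ^ 2 + 2 * b * c * r ^ 3 * Real.cos φ) * Real.sin_sq_add_cos_sq φ

open Complex in
theorem hasDerivAt_norm_sq_quadratic_ofReal_mul_exp (a b c r φ : ℝ) :
    HasDerivAt (fun ψ : ℝ => ‖(a : ℂ) + b * (r * exp (I * ψ)) + c * (r * exp (I * ψ)) ^ 2‖ ^ 2)
      (-2 * r * Real.sin φ * (b * (a + c * r ^ 2) + 4 * a * c * r * Real.cos φ)) φ := by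
  simp only [norm_sq_quadratic_ofReal_mul_exp]
  refine ((((Real.hasDerivAt_cos φ).const_mul (2 * b * r * (a + c * r ^ 2))).const_add _).add
    (((Real.hasDerivAt_cos φ).pow 2).const_mul (4 * a * c * r ^ 2))).congr_deriv ?_
  ring

theorem two_mul_mul_add_sq_sub_nonpos {θ r t : ℝ} (hθ : 1 / 2 ≤ θ) (hr₀ : 0 ≤ r) (hr₁ : r ≤ 1)
    (ht : t ≤ 1) : 2 * (2 * θ - 1) * r * t + r ^ 2 - (4 * θ - 1) ≤ 0 := by
  have hθ' : 0 ≤ 2 * θ - 1 := by linarith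
  nlinarith [mul_nonneg (mul_nonneg hθ' hr₀) (sub_nonneg.2 ht), mul_nonneg hθ' (sub_nonneg.2 hr₁),
    mul_nonneg hr₀ (sub_nonneg.2 hr₁)]

theorem stmt14 (θ : ℝ) (hθ : 1 / 2 ≤ θ) (r : ℝ) (hr : r ∈ Set.Icc (0 : ℝ) 1) :
    let g₂ : ℝ → ℝ := fun φ =>
      ‖(8 * θ ^ 2 : ℂ) + (4 * θ : ℂ) * ((r : ℂ) * Complex.exp (Complex.I * φ) - 1)
        + ((1 : ℂ) - 2 * θ) * ((r : ℂ) * Complex.exp (Complex.I * φ) - 1) ^ 2‖ ^ 2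
    (∀ φ : ℝ, deriv g₂ φ = 4 * (2 * θ - 1) * (4 * θ - 1)
        * (2 * (2 * θ - 1) * r * Real.cos φ + r ^ 2 - (4 * θ - 1)) * r * Real.sin φ) ∧
    (∀ φ : ℝ, 2 * (2 * θ - 1) * r * Real.cos φ + r ^ 2 - (4 * θ - 1) ≤ 0) ∧
    AntitoneOn g₂ (Set.Icc 0 Real.pi) := by
  intro g₂
  have hg₂ : g₂ = fun φ : ℝ => ‖(((2 * θ - 1) * (4 * θ - 1) : ℝ) : ℂ)
      + ((2 * (4 * θ - 1) : ℝ) : ℂ) * (r * Complex.exp (Complex.I * φ))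
      + ((1 - 2 * θ : ℝ) : ℂ) * (r * Complex.exp (Complex.I * φ)) ^ 2‖ ^ 2 := by
    funext φ
    simp only [g₂]
    congr 2
    push_cast
    ring
  have hderiv : ∀ φ, HasDerivAt g₂ (4 * (2 * θ - 1) * (4 * θ - 1)
      * (2 * (2 * θ - 1) * r * Real.cos φ + r ^ 2 - (4 * θ - 1)) * r * Real.sin φ) φ := by
    intro φ
    rw [hg₂]
    convert hasDerivAt_norm_sq_quadratic_ofReal_mul_exp _ _ _ r φ using 1
    ring
  have hfactor : ∀ φ, 2 * (2 * θ - 1) * r * Real.cos φ + r ^ 2 - (4 * θ - 1) ≤ 0 := fun φ =>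
    two_mul_mul_add_sq_sub_nonpos hθ hr.1 hr.2 (Real.cos_le_one φ)
  refine ⟨fun φ => (hderiv φ).deriv, hfactor, ?_⟩
  refine antitoneOn_of_hasDerivWithinAt_nonpos (convex_Icc 0 Real.pi)
    (fun φ _ => (hderiv φ).continuousAt.continuousWithinAt)
    (fun φ _ => (hderiv φ).hasDerivWithinAt) fun φ hφ => ?_
  rw [interior_Icc] at hφ
  have hsin : 0 ≤ Real.sin φ := Real.sin_nonneg_of_nonneg_of_le_pi hφ.1.le hφ.2.le
  have h2θ : 0 ≤ 2 * θ - 1 := by linarith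
  have h4θ : 0 ≤ 4 * θ - 1 := by linarith
  exact mul_nonpos_of_nonpos_of_nonneg (mul_nonpos_of_nonpos_of_nonneg
    (mul_nonpos_of_nonneg_of_nonpos (by positivity) (hfactor φ)) hr.1) hsin
end

section
/- Let D = (d_{ij}) be a 2×2 real positive semi-definite matrix, let c₁, c₂ ∈ ℝ, let a₁, a₂, b, q₁, q₂ > 0 with b² = a₁a₂ (e.g. a₁ = Δt/Δx², a₂ = Δt/Δy², b = Δt/(ΔxΔy)), let β ∈ [−1,1], and let φ₁, φ₂ ∈ ℝ. Define z₀ = (d₁₂+d₂₁)·b·[−sin φ₁ sin φ₂ + β(1−cos φ₁)(1−cos φ₂)], z₁ = −2d₁₁a₁(1−cos φ₁) + i·c₁q₁ sin φ₁, z₂ = −2d₂₂a₂(1−cos φ₂) + i·c₂q₂ sin φ₂. Then |z₀| ≤ 2√((Re z₁)(Re z₂)), Re z₁ ≤ 0, and Re z₂ ≤ 0. -/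
/-!
It suffices to compare squares: `z₁.re * z₂.re = 4 d₁₁ d₂₂ b² (1 - cos φ₁) (1 - cos φ₂)`, and
`z₀²` splits into two factors each dominated by its counterpart there. The matrix factor obeys
`(d₁₂ + d₂₁)² ≤ 4 d₁₁ d₂₂`, which is `det D ≥ 0`. In half angles `θᵢ = φᵢ / 2` the trigonometric
factor is `4 sin θ₁ sin θ₂ (-cos θ₁ cos θ₂ + β sin θ₁ sin θ₂)`, and the bracket is the inner
product of a unit vector with a vector of norm at most one.
-/

open Real

theorem Matrix.PosSemidef.sq_add_offDiag_le_four_mul_diag {D : Matrix (Fin 2) (Fin 2) ℝ}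
    (hD : D.PosSemidef) : (D 0 1 + D 1 0) ^ 2 ≤ 4 * (D 0 0 * D 1 1) := by
  have hsymm : D 1 0 = D 0 1 := hD.isHermitian.apply 0 1
  have hdet := hD.det_nonneg
  rw [Matrix.det_fin_two] at hdet
  rw [hsymm] at hdet ⊢
  linarith

theorem sq_neg_mul_add_mul_le_one {c₁ s₁ c₂ s₂ β : ℝ} (h₁ : s₁ ^ 2 + c₁ ^ 2 = 1)
    (h₂ : s₂ ^ 2 + c₂ ^ 2 = 1) (hβ : β ^ 2 ≤ 1) : (-c₁ * c₂ + β * s₁ * s₂) ^ 2 ≤ 1 := by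
  have hLagrange : (-c₁ * c₂ + β * s₁ * s₂) ^ 2 + (c₁ * β * s₂ + s₁ * c₂) ^ 2
      = (s₁ ^ 2 + c₁ ^ 2) * (c₂ ^ 2 + β ^ 2 * s₂ ^ 2) := by ring
  nlinarith [sq_nonneg (c₁ * β * s₂ + s₁ * c₂), mul_le_mul_of_nonneg_right hβ (sq_nonneg s₂)]

theorem sq_neg_sin_mul_sin_add_mul_one_sub_cos_le {β : ℝ} (hβ : β ∈ Set.Icc (-1 : ℝ) 1)
    (φ₁ φ₂ : ℝ) :
    (-sin φ₁ * sin φ₂ + β * (1 - cos φ₁) * (1 - cos φ₂)) ^ 2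
      ≤ 4 * ((1 - cos φ₁) * (1 - cos φ₂)) := by
  obtain ⟨θ₁, rfl⟩ : ∃ θ, φ₁ = 2 * θ := ⟨φ₁ / 2, by ring⟩
  obtain ⟨θ₂, rfl⟩ : ∃ θ, φ₂ = 2 * θ := ⟨φ₂ / 2, by ring⟩
  have hK := sq_neg_mul_add_mul_le_one (sin_sq_add_cos_sq θ₁) (sin_sq_add_cos_sq θ₂)
    (β := β) (by nlinarith [hβ.1, hβ.2])
  simp only [sin_two_mul, cos_two_mul, cos_sq']
  calc _ = 16 * (sin θ₁ * sin θ₂) ^ 2 * (-cos θ₁ * cos θ₂ + β * sin θ₁ * sin θ₂) ^ 2 := by ring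
    _ ≤ 16 * (sin θ₁ * sin θ₂) ^ 2 * 1 := by gcongr
    _ = _ := by ring

theorem abs_le_two_mul_sqrt_of_sq_le {x y : ℝ} (h : x ^ 2 ≤ 4 * y) : |x| ≤ 2 * √y := by
  calc |x| ≤ √(2 ^ 2 * y) := Real.abs_le_sqrt (by linarith)
    _ = 2 * √y := by rw [Real.sqrt_mul (by norm_num), Real.sqrt_sq zero_le_two]

theorem stmt17_general (D : Matrix (Fin 2) (Fin 2) ℝ) (hD : D.PosSemidef)
    (c₁ c₂ a₁ a₂ b q₁ q₂ : ℝ)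
    (ha₁ : 0 < a₁) (ha₂ : 0 < a₂)
    (hba : b ^ 2 = a₁ * a₂)
    (β : ℝ) (hβ : β ∈ Set.Icc (-1 : ℝ) 1) (φ₁ φ₂ : ℝ) :
    let z₀ : ℝ := (D 0 1 + D 1 0) * b *
      (-Real.sin φ₁ * Real.sin φ₂ + β * (1 - Real.cos φ₁) * (1 - Real.cos φ₂))
    let z₁ : ℂ := (-2 * D 0 0 * a₁ * (1 - Real.cos φ₁) : ℝ)
      + Complex.I * (c₁ * q₁ * Real.sin φ₁ : ℝ)
    let z₂ : ℂ := (-2 * D 1 1 * a₂ * (1 - Real.cos φ₂) : ℝ)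
      + Complex.I * (c₂ * q₂ * Real.sin φ₂ : ℝ)
    |z₀| ≤ 2 * Real.sqrt (z₁.re * z₂.re) ∧ z₁.re ≤ 0 ∧ z₂.re ≤ 0 := by
  intro z₀ z₁ z₂
  have hre₁ : z₁.re = -2 * D 0 0 * a₁ * (1 - cos φ₁) := by
    simp only [z₁, Complex.add_re, Complex.ofReal_re, Complex.I_mul_re, Complex.ofReal_im]; ring
  have hre₂ : z₂.re = -2 * D 1 1 * a₂ * (1 - cos φ₂) := by
    simp only [z₂, Complex.add_re, Complex.ofReal_re, Complex.I_mul_re, Complex.ofReal_im]; ring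
  have hu₁ : 0 ≤ 1 - cos φ₁ := sub_nonneg.mpr (cos_le_one φ₁)
  have hu₂ : 0 ≤ 1 - cos φ₂ := sub_nonneg.mpr (cos_le_one φ₂)
  have hd₀ : 0 ≤ D 0 0 := hD.diag_nonneg
  have hd₁ : 0 ≤ D 1 1 := hD.diag_nonneg
  refine ⟨abs_le_two_mul_sqrt_of_sq_le ?_, ?_, ?_⟩
  · have hoff := hD.sq_add_offDiag_le_four_mul_diag
    have htrig := sq_neg_sin_mul_sin_add_mul_one_sub_cos_le hβ φ₁ φ₂
    calc z₀ ^ 2 = b ^ 2 * ((D 0 1 + D 1 0) ^ 2 *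
          (-sin φ₁ * sin φ₂ + β * (1 - cos φ₁) * (1 - cos φ₂)) ^ 2) := by ring
      _ ≤ b ^ 2 * (4 * (D 0 0 * D 1 1) * (4 * ((1 - cos φ₁) * (1 - cos φ₂)))) := by
          gcongr
      _ = 4 * (z₁.re * z₂.re) := by rw [hre₁, hre₂, hba]; ring
  · rw [hre₁]
    have := mul_nonneg (mul_nonneg hd₀ ha₁.le) hu₁
    linarith
  · rw [hre₂]
    have := mul_nonneg (mul_nonneg hd₁ ha₂.le) hu₂
    linarith

theorem stmt17 (D : Matrix (Fin 2) (Fin 2) ℝ) (hD : D.PosSemidef)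
    (c₁ c₂ a₁ a₂ b q₁ q₂ : ℝ)
    (ha₁ : 0 < a₁) (ha₂ : 0 < a₂) (hb : 0 < b) (hq₁ : 0 < q₁) (hq₂ : 0 < q₂)
    (hba : b ^ 2 = a₁ * a₂)
    (β : ℝ) (hβ : β ∈ Set.Icc (-1 : ℝ) 1) (φ₁ φ₂ : ℝ) :
    let z₀ : ℝ := (D 0 1 + D 1 0) * b *
      (-Real.sin φ₁ * Real.sin φ₂ + β * (1 - Real.cos φ₁) * (1 - Real.cos φ₂))
    let z₁ : ℂ := (-2 * D 0 0 * a₁ * (1 - Real.cos φ₁) : ℝ)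
      + Complex.I * (c₁ * q₁ * Real.sin φ₁ : ℝ)
    let z₂ : ℂ := (-2 * D 1 1 * a₂ * (1 - Real.cos φ₂) : ℝ)
      + Complex.I * (c₂ * q₂ * Real.sin φ₂ : ℝ)
    |z₀| ≤ 2 * Real.sqrt (z₁.re * z₂.re) ∧ z₁.re ≤ 0 ∧ z₂.re ≤ 0 :=
  stmt17_general D hD c₁ c₂ a₁ a₂ b q₁ q₂ ha₁ ha₂ hba β hβ φ₁ φ₂
end

section
/- For real β with |β| ≤ 1 and real angles φ₁, φ₂, the inequality |−sin φ₁ sin φ₂ + β(1−cos φ₁)(1−cos φ₂)| ≤ 2√((1−cos φ₁)(1−cos φ₂)) holds. -/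
/-! Substituting `φᵢ = 2θᵢ` gives `1 - cos φᵢ = 2 sin² θᵢ` and `sin φᵢ = 2 sin θᵢ cos θᵢ`, so the
left-hand side is `4 |sin θ₁ sin θ₂| · |-cos θ₁ cos θ₂ + β sin θ₁ sin θ₂|` and the right-hand side
is `4 |sin θ₁ sin θ₂|`. The remaining factor is at most `|cos θ₁ cos θ₂| + |sin θ₁ sin θ₂| ≤ 1`,
by AM-GM applied to each product. -/

open Real

lemma abs_cos_mul_cos_add_abs_sin_mul_sin_le_one (θ ψ : ℝ) :
    |cos θ * cos ψ| + |sin θ * sin ψ| ≤ 1 := by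
  have hcos := two_mul_le_add_sq |cos θ| |cos ψ|
  have hsin := two_mul_le_add_sq |sin θ| |sin ψ|
  simp only [sq_abs] at hcos hsin
  rw [abs_mul, abs_mul]
  nlinarith [sin_sq_add_cos_sq θ, sin_sq_add_cos_sq ψ]

lemma abs_neg_cos_mul_cos_add_mul_sin_mul_sin_le_one {β : ℝ} (hβ : |β| ≤ 1) (θ ψ : ℝ) :
    |-cos θ * cos ψ + β * (sin θ * sin ψ)| ≤ 1 :=
  calc |-cos θ * cos ψ + β * (sin θ * sin ψ)|
      ≤ |cos θ * cos ψ| + |β| * |sin θ * sin ψ| := by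
        simpa only [neg_mul, abs_neg, abs_mul β] using
          abs_add_le (-cos θ * cos ψ) (β * (sin θ * sin ψ))
    _ ≤ |cos θ * cos ψ| + |sin θ * sin ψ| := by
        gcongr
        exact mul_le_of_le_one_left (abs_nonneg _) hβ
    _ ≤ 1 := abs_cos_mul_cos_add_abs_sin_mul_sin_le_one θ ψ

lemma one_sub_cos_two_mul (θ : ℝ) : 1 - cos (2 * θ) = 2 * sin θ ^ 2 := by
  rw [cos_two_mul, cos_sq']
  ring

lemma sqrt_one_sub_cos_two_mul_mul_one_sub_cos_two_mul (θ ψ : ℝ) :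
    √((1 - cos (2 * θ)) * (1 - cos (2 * ψ))) = 2 * |sin θ * sin ψ| := by
  rw [one_sub_cos_two_mul, one_sub_cos_two_mul,
    show 2 * sin θ ^ 2 * (2 * sin ψ ^ 2) = (2 * (sin θ * sin ψ)) ^ 2 by ring,
    sqrt_sq_eq_abs, abs_mul, abs_two]

theorem stmt19 (β φ₁ φ₂ : ℝ) (hβ : |β| ≤ 1) :
    |-Real.sin φ₁ * Real.sin φ₂ + β * (1 - Real.cos φ₁) * (1 - Real.cos φ₂)|
      ≤ 2 * Real.sqrt ((1 - Real.cos φ₁) * (1 - Real.cos φ₂)) := by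
  obtain ⟨θ, rfl⟩ : ∃ θ, φ₁ = 2 * θ := ⟨φ₁ / 2, by ring⟩
  obtain ⟨ψ, rfl⟩ : ∃ ψ, φ₂ = 2 * ψ := ⟨φ₂ / 2, by ring⟩
  have hfactor : -sin (2 * θ) * sin (2 * ψ) + β * (1 - cos (2 * θ)) * (1 - cos (2 * ψ))
      = 4 * (sin θ * sin ψ) * (-cos θ * cos ψ + β * (sin θ * sin ψ)) := by
    rw [sin_two_mul, sin_two_mul, one_sub_cos_two_mul, one_sub_cos_two_mul]
    ring
  rw [hfactor, sqrt_one_sub_cos_two_mul_mul_one_sub_cos_two_mul, abs_mul, abs_mul,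
    abs_of_pos four_pos]
  calc 4 * |sin θ * sin ψ| * |-cos θ * cos ψ + β * (sin θ * sin ψ)|
      ≤ 4 * |sin θ * sin ψ| * 1 := by
        gcongr
        exact abs_neg_cos_mul_cos_add_mul_sin_mul_sin_le_one hβ θ ψ
    _ = 2 * (2 * |sin θ * sin ψ|) := by ring
end
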